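/- arXiv:1109.3490 — 3 statements merged into one kernel-verified Lean document; each statement's English description precedes it below -/
import Mathlib

section
/- Let φ : Δ^{0̂} → Δ be a group epimorphism and H ≤ Δ, and set B = H φ⁻¹. Then N_Δ(H)/H ≅ (N_Δ(H))φ⁻¹ / B ≅ (N_Δ(B) ∩ Δ^{0̂})/B, and this is a subgroup of index at most 2 (i.e. index 1 or 2) in N_Δ(B)/B. -/
/-- The relations making each generator an involution. -/
def rels : Set (FreeGroup (Fin 3)) := {x | ∃ i, x = (FreeGroup.of i) ^ 2}

/-- Δ = C₂ * C₂ * C₂. -/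
abbrev Δ := PresentedGroup rels

/-- The generators R₀, R₁, R₂ of Δ. -/
def R (i : Fin 3) : Δ := PresentedGroup.of i

/-- Δ^{0̂}, the normal closure of {R₁, R₂}, an index-2 subgroup of Δ. -/
def Δ0 : Subgroup Δ := Subgroup.normalClosure {R 1, R 2}

/-- Δ⁺, the even-word subgroup of Δ. -/
def Δplus : Subgroup Δ := Subgroup.closure {R 1 * R 2, R 2 * R 0, R 0 * R 1}

/-- The preimage H φ⁻¹, regarded as a subgroup of Δ. -/
def preim (φ : Δ0 →* Δ) (H : Subgroup Δ) : Subgroup Δ :=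
  (H.comap φ).map Δ0.subtype

/-- The kernel of φ, regarded as a subgroup of Δ. -/
def kerS (φ : Δ0 →* Δ) : Subgroup Δ := φ.ker.map Δ0.subtype

/-- The conjugate K^g = g⁻¹ K g. -/
def conjS (K : Subgroup Δ) (g : Δ) : Subgroup Δ :=
  K.map (MulAut.conj g⁻¹).toMonoidHom

/-- The four involutions R₁, R₂, R₁^{R₀}, R₂^{R₀} generating Δ^{0̂}. -/
def gens : Set Δ := {R 1, R 2, (R 0)⁻¹ * R 1 * R 0, (R 0)⁻¹ * R 2 * R 0}

lemma subgroupOf_normal_of_le_normalizer {G : Type*} [Group G] {B K : Subgroup G}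
    (hK : K ≤ (Subgroup.normalizer (B : Set G))) (hBK : B ≤ K) : (B.subgroupOf K).Normal := by
  rw [Subgroup.normal_subgroupOf_iff hBK]
  intro b k hb hk
  exact ((Subgroup.mem_normalizer_iff.mp (hK hk)) b).mp hb

instance instA (φ : Δ0 →* Δ) (H : Subgroup Δ) :
    ((preim φ H).subgroupOf (preim φ (Subgroup.normalizer (H : Set Δ)))).Normal := by
  unfold preim
  rw [Subgroup.normal_subgroupOf_iff
    (Subgroup.map_mono (Subgroup.comap_mono Subgroup.le_normalizer))]
  rintro b n ⟨x, hx, rfl⟩ ⟨y, hy, rfl⟩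
  refine ⟨y * x * y⁻¹, ?_, rfl⟩
  refine Subgroup.mem_comap.mpr ?_
  rw [map_mul, map_mul, map_inv]
  exact ((Subgroup.mem_normalizer_iff.mp (Subgroup.mem_comap.mp hy)) (φ x)).mp
    (Subgroup.mem_comap.mp hx)

instance instB (φ : Δ0 →* Δ) (H : Subgroup Δ) :
    ((preim φ H).subgroupOf ((Subgroup.normalizer (preim φ H : Set Δ)) ⊓ Δ0)).Normal := by
  refine subgroupOf_normal_of_le_normalizer inf_le_left (le_inf Subgroup.le_normalizer ?_)
  rintro b ⟨x, _, rfl⟩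
  exact x.2

lemma preim_le (φ : Δ0 →* Δ) (K : Subgroup Δ) : preim φ K ≤ Δ0 :=
  Subgroup.map_subtype_le _

lemma mem_preim {φ : Δ0 →* Δ} {K : Subgroup Δ} {g : Δ0} :
    (g : Δ) ∈ preim φ K ↔ φ g ∈ K := by
  constructor
  · rintro ⟨y, hy, hyg⟩
    rwa [show y = g from Subtype.ext hyg] at hy
  · intro h
    exact ⟨g, h, rfl⟩

lemma R_sq (i : Fin 3) : R i ^ 2 = 1 := by
  have h : (FreeGroup.of i) ^ 2 ∈ Subgroup.normalClosure rels :=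
    Subgroup.subset_normalClosure ⟨i, rfl⟩
  have : (QuotientGroup.mk (FreeGroup.of i ^ 2) : Δ) = 1 := (QuotientGroup.eq_one_iff _).mpr h
  exact (map_pow (PresentedGroup.mk rels) (FreeGroup.of i) 2).symm.trans this

instance : Δ0.Normal := Subgroup.normalClosure_normal

lemma Δ0_cosets : Function.Surjective
    (fun b : Bool => if b then ((R 0 : Δ) : Δ ⧸ Δ0) else 1) := by
  intro q
  induction q using QuotientGroup.induction_on with
  | _ g =>
    have hg : g ∈ Subgroup.closure (Set.range (PresentedGroup.of : Fin 3 → Δ)) := by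
      rw [PresentedGroup.closure_range_of]; trivial
    have : ((g : Δ ⧸ Δ0) = 1) ∨ ((g : Δ ⧸ Δ0) = ((R 0 : Δ) : Δ ⧸ Δ0)) := by
      induction hg using Subgroup.closure_induction with
      | mem x hx =>
        obtain ⟨i, rfl⟩ := hx
        fin_cases i
        · exact Or.inr rfl
        · exact Or.inl ((QuotientGroup.eq_one_iff _).mpr
            (Subgroup.subset_normalClosure (Or.inl rfl)))
        · exact Or.inl ((QuotientGroup.eq_one_iff _).mpr
            (Subgroup.subset_normalClosure (Or.inr rfl)))
      | one => exact Or.inl rfl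
      | mul x y _ _ hx hy =>
        have key : ((R 0 : Δ) : Δ ⧸ Δ0) * ((R 0 : Δ) : Δ ⧸ Δ0) = 1 := by
          rw [← QuotientGroup.mk_mul, ← pow_two, R_sq, QuotientGroup.mk_one]
        rcases hx with hx | hx <;> rcases hy with hy | hy <;>
          rw [QuotientGroup.mk_mul, hx, hy]
        · exact Or.inl (one_mul 1)
        · exact Or.inr (one_mul _)
        · exact Or.inr (mul_one _)
        · exact Or.inl key
      | inv x _ hx =>
        have key : (((R 0 : Δ) : Δ ⧸ Δ0))⁻¹ = ((R 0 : Δ) : Δ ⧸ Δ0) := by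
          refine inv_eq_of_mul_eq_one_left ?_
          rw [← QuotientGroup.mk_mul, ← pow_two, R_sq, QuotientGroup.mk_one]
        rcases hx with hx | hx <;> rw [QuotientGroup.mk_inv, hx]
        · exact Or.inl inv_one
        · exact Or.inr key
    rcases this with h | h
    · exact ⟨false, h.symm⟩
    · exact ⟨true, h.symm⟩

lemma Δ0_index_le : Δ0.index ≤ 2 :=
  calc Δ0.index = Nat.card (Δ ⧸ Δ0) := rfl
    _ ≤ Nat.card Bool := Nat.card_le_card_of_surjective _ Δ0_cosets
    _ = 2 := by simp

lemma Δ0_index_pos : 0 < Δ0.index := by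
  haveI : Finite (Δ ⧸ Δ0) := Finite.of_surjective _ Δ0_cosets
  exact Nat.card_pos

/-- key equality: preimage of normalizer = normalizer of preimage ∩ Δ0 -/
lemma preim_normalizer (φ : Δ0 →* Δ) (hφ : Function.Surjective φ) (H : Subgroup Δ) :
    preim φ (Subgroup.normalizer (H : Set Δ)) = (Subgroup.normalizer (preim φ H : Set Δ)) ⊓ Δ0 := by
  apply le_antisymm
  · intro g hg
    obtain ⟨y, hy, rfl⟩ := hg
    refine ⟨Subgroup.mem_normalizer_iff.mpr fun b => ?_, y.2⟩
    constructor
    · rintro ⟨x, hx, rfl⟩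
      refine ⟨y * x * y⁻¹, ?_, rfl⟩
      exact Subgroup.mem_comap.mpr (by
        rw [map_mul, map_mul, map_inv]
        exact (Subgroup.mem_normalizer_iff.mp hy (φ x)).mp hx)
    · intro hb
      have hb' : (b : Δ) ∈ Δ0 := by
        obtain ⟨x, _, hx⟩ := hb
        have : (y : Δ) * b * (y : Δ)⁻¹ ∈ Δ0 := hx ▸ x.2
        have h2 := mul_mem (mul_mem (inv_mem y.2) this) y.2
        group at h2
        simpa using h2
      set b' : Δ0 := ⟨b, hb'⟩
      obtain ⟨x, hx, hxe⟩ := hb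
      have hx2 : x = y * b' * y⁻¹ := Subtype.ext (by simpa using hxe)
      rw [hx2] at hx
      have := Subgroup.mem_comap.mp hx
      rw [map_mul, map_mul, map_inv] at this
      have h3 := (Subgroup.mem_normalizer_iff.mp hy (φ b')).mpr this
      exact ⟨b', h3, rfl⟩
  · rintro g ⟨hgN, hgΔ⟩
    set g' : Δ0 := ⟨g, hgΔ⟩
    have fwd : ∀ g'' : Δ0, (g'' : Δ) ∈ (Subgroup.normalizer (preim φ H : Set Δ)) → ∀ h ∈ H,
        φ g'' * h * (φ g'')⁻¹ ∈ H := by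
      intro g'' hg'' h hh
      obtain ⟨d, hd⟩ := hφ h
      have hdB : (d : Δ) ∈ preim φ H := mem_preim.mpr (hd ▸ hh)
      have : (g'' : Δ) * d * (g'' : Δ)⁻¹ ∈ preim φ H :=
        (Subgroup.mem_normalizer_iff.mp hg'' _).mp hdB
      have : ((g'' * d * g''⁻¹ : Δ0) : Δ) ∈ preim φ H := by simpa using this
      have := mem_preim.mp this
      rwa [map_mul, map_mul, map_inv, hd] at this
    refine ⟨g', Subgroup.mem_normalizer_iff.mpr fun h => ⟨fwd g' hgN h, fun hh => ?_⟩, rfl⟩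
    have hginv : ((g'⁻¹ : Δ0) : Δ) ∈ (Subgroup.normalizer (preim φ H : Set Δ)) := inv_mem hgN
    have := fwd g'⁻¹ hginv _ hh
    rw [map_inv] at this
    group at this
    simpa using this

noncomputable section
variable (φ : Δ0 →* Δ) (H : Subgroup Δ)

def ψ : ↥(preim φ (Subgroup.normalizer (H : Set Δ))) →* ↥(Subgroup.normalizer (H : Set Δ)) :=
  (φ.comp (Subgroup.inclusion (preim_le φ (Subgroup.normalizer (H : Set Δ))))).codRestrict (Subgroup.normalizer (H : Set Δ))
    (fun x => mem_preim.mp x.2)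

def θ : ↥(preim φ (Subgroup.normalizer (H : Set Δ))) →* (↥(Subgroup.normalizer (H : Set Δ)) ⧸ (H.subgroupOf (Subgroup.normalizer (H : Set Δ)))) :=
  (QuotientGroup.mk' (H.subgroupOf (Subgroup.normalizer (H : Set Δ)))).comp (ψ φ H)

lemma θ_surj (hφ : Function.Surjective φ) : Function.Surjective (θ φ H) := by
  intro q
  induction q using QuotientGroup.induction_on with
  | _ n =>
    obtain ⟨d, hd⟩ := hφ (n : Δ)
    refine ⟨⟨d, mem_preim.mpr (hd ▸ n.2)⟩, ?_⟩
    have : ψ φ H ⟨d, mem_preim.mpr (hd ▸ n.2)⟩ = n := Subtype.ext hd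
    simp [θ, this]

lemma θ_ker : (θ φ H).ker = (preim φ H).subgroupOf (preim φ (Subgroup.normalizer (H : Set Δ))) := by
  ext x
  rw [θ, MonoidHom.mem_ker, MonoidHom.comp_apply, ← MonoidHom.mem_ker,
    QuotientGroup.ker_mk']
  change φ _ ∈ H ↔ _
  rw [Subgroup.mem_subgroupOf]
  exact (mem_preim (g := Subgroup.inclusion (preim_le φ (Subgroup.normalizer (H : Set Δ))) x)).symm

lemma part2 (hφ : Function.Surjective φ) :
    Nonempty ((↥(Subgroup.normalizer (H : Set Δ)) ⧸ (H.subgroupOf (Subgroup.normalizer (H : Set Δ)))) ≃*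
      (↥(preim φ (Subgroup.normalizer (H : Set Δ))) ⧸ ((preim φ H).subgroupOf (preim φ (Subgroup.normalizer (H : Set Δ)))))) := by
  have e := QuotientGroup.quotientKerEquivOfSurjective (θ φ H) (θ_surj φ H hφ)
  exact ⟨e.symm.trans (QuotientGroup.quotientMulEquivOfEq (θ_ker φ H))⟩
end

lemma quot_congr {G : Type*} [Group G] {A B : Subgroup G} {S : Subgroup G} (h : A = B)
    [h1 : (S.subgroupOf A).Normal] [h2 : (S.subgroupOf B).Normal] :
    Nonempty ((↥A ⧸ S.subgroupOf A) ≃* (↥B ⧸ S.subgroupOf B)) := by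
  subst h
  exact ⟨MulEquiv.refl _⟩

theorem stmt5 (φ : Δ0 →* Δ) (hφ : Function.Surjective φ) (H : Subgroup Δ) :
    Nonempty ((↥(preim φ (Subgroup.normalizer (H : Set Δ))) ⧸ ((preim φ H).subgroupOf (preim φ (Subgroup.normalizer (H : Set Δ))))) ≃*
      (↥((Subgroup.normalizer (preim φ H : Set Δ)) ⊓ Δ0) ⧸ ((preim φ H).subgroupOf ((Subgroup.normalizer (preim φ H : Set Δ)) ⊓ Δ0)))) ∧
    Nonempty ((↥(Subgroup.normalizer (H : Set Δ)) ⧸ (H.subgroupOf (Subgroup.normalizer (H : Set Δ)))) ≃*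
      (↥(preim φ (Subgroup.normalizer (H : Set Δ))) ⧸ ((preim φ H).subgroupOf (preim φ (Subgroup.normalizer (H : Set Δ)))))) ∧
    (((Subgroup.normalizer (preim φ H : Set Δ)) ⊓ Δ0).subgroupOf (Subgroup.normalizer (preim φ H : Set Δ))).index ≤ 2 := by
  refine ⟨?_, part2 φ H hφ, ?_⟩
  · exact quot_congr (preim_normalizer φ hφ H)
  · rw [Subgroup.inf_subgroupOf_left]
    have hdvd : Δ0.relIndex (Subgroup.normalizer (preim φ H : Set Δ)) ∣ Δ0.index :=
      Subgroup.relIndex_dvd_index_of_normal Δ0 (Subgroup.normalizer (preim φ H : Set Δ))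
    exact le_trans (Nat.le_of_dvd Δ0_index_pos hdvd) Δ0_index_le
end

section
/- Let φ : Δ^{0̂} → Δ be a group epimorphism and let g be a conjugate in Δ^{0̂} of one of R₁, R₂, R₁^{R₀}, R₂^{R₀}. Then gφ is either the identity or a conjugate in Δ of R₀, R₁ or R₂; moreover g ∈ Δ⁺ φ⁻¹ if and only if g ∈ ker φ. -/
lemma R_mul_self (i : Fin 3) : R i * R i = 1 := by
  have h : PresentedGroup.mk rels (FreeGroup.of i ^ 2) = 1 :=
    (QuotientGroup.eq_one_iff _).2 (Subgroup.subset_normalClosure ⟨i, rfl⟩)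
  rwa [map_pow, pow_two] at h

lemma R_inv (i : Fin 3) : (R i)⁻¹ = R i :=
  inv_eq_of_mul_eq_one_right (R_mul_self i)

section ReducedWord

variable {α : Type*} [DecidableEq α]

namespace List

def pushInvolution (i : α) (l : List α) : List α :=
  if l.head? = some i then l.tail else i :: l

variable {i : α} {l : List α}

lemma pushInvolution_of_head? (h : l.head? = some i) : l.pushInvolution i = l.tail :=
  if_pos h

lemma pushInvolution_of_not_head? (h : l.head? ≠ some i) : l.pushInvolution i = i :: l :=
  if_neg h

lemma IsChain.pushInvolution (hl : l.IsChain (· ≠ ·)) :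
    (l.pushInvolution i).IsChain (· ≠ ·) := by
  by_cases h : l.head? = some i
  · rw [pushInvolution_of_head? h]; exact hl.tail
  · rw [pushInvolution_of_not_head? h]
    exact List.isChain_cons.2 ⟨fun y hy hiy => h (by rw [hy, hiy]), hl⟩

lemma pushInvolution_pushInvolution (hl : l.IsChain (· ≠ ·)) :
    (l.pushInvolution i).pushInvolution i = l := by
  by_cases h : l.head? = some i
  · obtain ⟨t, rfl⟩ := List.head?_eq_some_iff.1 h
    have ht : t.head? ≠ some i := fun hc => (List.isChain_cons.1 hl).1 i hc rfl
    rw [pushInvolution_of_head? h, tail_cons, pushInvolution_of_not_head? ht]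
  · rw [pushInvolution_of_not_head? h, pushInvolution_of_head? rfl, tail_cons]

end List

abbrev ReducedWord (α : Type*) := {l : List α // l.IsChain (· ≠ ·)}

def ReducedWord.pushPerm (i : α) : Equiv.Perm (ReducedWord α) :=
  Function.Involutive.toPerm (fun l => ⟨l.1.pushInvolution i, l.2.pushInvolution⟩)
    fun l => Subtype.ext (List.pushInvolution_pushInvolution l.2)

lemma ReducedWord.pushPerm_mul_self (i : α) : pushPerm i * pushPerm i = 1 :=
  Equiv.ext fun l => Subtype.ext (List.pushInvolution_pushInvolution l.2)

end ReducedWord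

def wordProd (l : List (Fin 3)) : Δ := (l.map R).prod

lemma wordProd_cons (a : Fin 3) (l : List (Fin 3)) : wordProd (a :: l) = R a * wordProd l :=
  List.prod_cons

lemma wordProd_append (l m : List (Fin 3)) : wordProd (l ++ m) = wordProd l * wordProd m := by
  simp [wordProd]

lemma wordProd_pushInvolution (i : Fin 3) (l : List (Fin 3)) :
    wordProd (l.pushInvolution i) = R i * wordProd l := by
  by_cases h : l.head? = some i
  · obtain ⟨t, rfl⟩ := List.head?_eq_some_iff.1 h
    rw [List.pushInvolution_of_head? h, List.tail_cons, wordProd_cons, ← mul_assoc,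
      R_mul_self, one_mul]
  · rw [List.pushInvolution_of_not_head? h, wordProd_cons]

def wordAction : Δ →* Equiv.Perm (ReducedWord (Fin 3)) :=
  PresentedGroup.toGroup (f := ReducedWord.pushPerm) <| by
    rintro r ⟨i, rfl⟩
    rw [map_pow, FreeGroup.lift_apply_of, pow_two, ReducedWord.pushPerm_mul_self]

lemma wordAction_R (i : Fin 3) : wordAction (R i) = ReducedWord.pushPerm i :=
  PresentedGroup.toGroup.of _

lemma wordProd_wordAction (x : Δ) (w : ReducedWord (Fin 3)) :
    wordProd (wordAction x w).1 = x * wordProd w.1 := by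
  have hx : x ∈ Subgroup.closure (Set.range R) :=
    (PresentedGroup.closure_range_of rels).symm ▸ Subgroup.mem_top x
  induction hx using Subgroup.closure_induction generalizing w with
  | mem _ hy =>
    obtain ⟨i, rfl⟩ := hy
    rw [wordAction_R]
    exact wordProd_pushInvolution i w.1
  | one => simp
  | mul y z _ _ hy hz => rw [map_mul, Equiv.Perm.mul_apply, hy, hz, mul_assoc]
  | inv y _ hy =>
    rw [eq_inv_mul_iff_mul_eq, ← hy, ← Equiv.Perm.mul_apply, ← map_mul, mul_inv_cancel,
      map_one, Equiv.Perm.one_apply]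

lemma wordAction_wordProd (w : ReducedWord (Fin 3)) :
    wordAction (wordProd w.1) ⟨[], List.isChain_nil⟩ = w := by
  obtain ⟨l, hl⟩ := w
  induction l with
  | nil => simp [wordProd]
  | cons a t ih =>
    have hat := List.isChain_cons.1 hl
    rw [wordProd_cons, map_mul, Equiv.Perm.mul_apply, ih hat.2, wordAction_R]
    exact Subtype.ext (List.pushInvolution_of_not_head? fun h => hat.1 a h rfl)

lemma exists_reduced_wordProd_eq (x : Δ) :
    ∃ l : List (Fin 3), l.IsChain (· ≠ ·) ∧ wordProd l = x :=
  ⟨_, (wordAction x ⟨[], List.isChain_nil⟩).2, by rw [wordProd_wordAction]; exact mul_one x⟩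

lemma wordProd_ne_one {l : List (Fin 3)} (hl : l.IsChain (· ≠ ·)) (hne : l ≠ []) :
    wordProd l ≠ 1 := by
  intro h
  have h' := wordAction_wordProd ⟨l, hl⟩
  rw [h, map_one] at h'
  exact hne (congrArg Subtype.val h').symm

lemma conj_mul_self {G : Type*} [Group G] (c x : G) :
    c⁻¹ * x * c * (c⁻¹ * x * c) = c⁻¹ * (x * x) * c := by
  group

lemma wordProd_eq_one_or_conj_R {l : List (Fin 3)} (hl : l.IsChain (· ≠ ·))
    (h : wordProd l * wordProd l = 1) :
    wordProd l = 1 ∨ ∃ i c, wordProd l = c⁻¹ * R i * c := by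
  induction hn : l.length using Nat.strong_induction_on generalizing l with
  | _ n ih =>
  rcases l with _ | ⟨a, t⟩
  · exact Or.inl rfl
  rcases t.eq_nil_or_concat with rfl | ⟨m, b, rfl⟩
  · exact Or.inr ⟨a, 1, by simp [wordProd]⟩
  rw [List.concat_eq_append, ← List.cons_append] at hl h ⊢
  obtain rfl | hab := eq_or_ne a b
  · have hconj : wordProd (a :: m ++ [a]) = (R a)⁻¹ * wordProd m * R a := by
      simp [wordProd, R_inv, mul_assoc]
    have hm : wordProd m * wordProd m = 1 := by
      rw [hconj, conj_mul_self, mul_assoc, inv_mul_eq_one] at h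
      exact mul_eq_right.1 h.symm
    have hlen : m.length < n := by simp [← hn]
    rcases ih _ hlen (List.isChain_cons.1 hl).2.left_of_append hm rfl with hm1 | ⟨i, c, hc⟩
    · exact Or.inl (by rw [hconj, hm1, mul_one, inv_mul_cancel])
    · exact Or.inr ⟨i, c * R a, by rw [hconj, hc]; group⟩
  · have hll : (a :: m ++ [b] ++ (a :: m ++ [b])).IsChain (· ≠ ·) :=
      hl.append hl (by rw [List.getLast?_concat]; simpa using hab.symm)
    exact absurd (by rw [wordProd_append, h]) (wordProd_ne_one hll (by simp))

def sign : Δ →* ℤˣ :=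
  PresentedGroup.toGroup (f := fun _ => -1) <| by
    rintro r ⟨i, rfl⟩
    rw [map_pow, FreeGroup.lift_apply_of]
    decide

lemma sign_R (i : Fin 3) : sign (R i) = -1 := PresentedGroup.toGroup.of _

lemma sign_conj_R (c : Δ) (i : Fin 3) : sign (c⁻¹ * R i * c) = -1 := by
  simp [sign_R]

lemma Δplus_le_ker_sign : Δplus ≤ sign.ker := by
  rw [Δplus, Subgroup.closure_le]
  rintro x (rfl | rfl | rfl) <;> simp [MonoidHom.mem_ker, sign_R]

lemma conj_R_not_mem_Δplus (c : Δ) (i : Fin 3) : c⁻¹ * R i * c ∉ Δplus := fun h => by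
  have := Δplus_le_ker_sign h
  rw [MonoidHom.mem_ker, sign_conj_R] at this
  exact absurd this (by decide)

theorem eq_one_or_conj_R_of_mul_self_eq_one {x : Δ} (hx : x * x = 1) :
    x = 1 ∨ ∃ i c, x = c⁻¹ * R i * c := by
  obtain ⟨l, hl, rfl⟩ := exists_reduced_wordProd_eq x
  exact wordProd_eq_one_or_conj_R hl hx

lemma mul_self_eq_one_of_mem_gens {s : Δ} (hs : s ∈ gens) : s * s = 1 := by
  rcases hs with rfl | rfl | rfl | rfl
  · exact R_mul_self 1
  · exact R_mul_self 2
  all_goals rw [conj_mul_self, R_mul_self, mul_one, inv_mul_cancel]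

theorem stmt10_general (φ : Δ0 →* Δ)
    (g : Δ0) (hg : ∃ s ∈ gens, ∃ c ∈ Δ0, (g : Δ) = c⁻¹ * s * c) :
    (φ g = 1 ∨ ∃ i : Fin 3, ∃ c : Δ, φ g = c⁻¹ * R i * c) ∧
    ((g : Δ) ∈ preim φ Δplus ↔ g ∈ φ.ker) := by
  obtain ⟨s, hs, c, -, hgc⟩ := hg
  have hg2 : g * g = 1 := Subtype.ext <| by
    rw [Subgroup.coe_mul, hgc, conj_mul_self, mul_self_eq_one_of_mem_gens hs, mul_one,
      inv_mul_cancel, Subgroup.coe_one]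
  have hφg : φ g = 1 ∨ ∃ i c, φ g = c⁻¹ * R i * c :=
    eq_one_or_conj_R_of_mul_self_eq_one (by rw [← map_mul, hg2, map_one])
  refine ⟨hφg, ⟨?_, fun h => ?_⟩⟩
  · rintro ⟨x, hx, hxg⟩
    obtain rfl : x = g := Subtype.ext hxg
    rcases hφg with h1 | ⟨i, d, hd⟩
    · exact h1
    · exact absurd (hd ▸ hx) (conj_R_not_mem_Δplus d i)
  · refine ⟨g, ?_, rfl⟩
    rw [SetLike.mem_coe, Subgroup.mem_comap, MonoidHom.mem_ker.1 h]
    exact one_mem Δplus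

theorem stmt10 (φ : Δ0 →* Δ) (hφ : Function.Surjective φ)
    (g : Δ0) (hg : ∃ s ∈ gens, ∃ c ∈ Δ0, (g : Δ) = c⁻¹ * s * c) :
    (φ g = 1 ∨ ∃ i : Fin 3, ∃ c : Δ, φ g = c⁻¹ * R i * c) ∧
    ((g : Δ) ∈ preim φ Δplus ↔ g ∈ φ.ker) :=
  stmt10_general φ g hg
end

section
/- Let φ : Δ^{0̂} → Δ be a group epimorphism and H ≤ Δ with H ⊄ Δ⁺. Then H φ⁻¹ ⊄ Δ⁺. (If φ(H) is orientable then H is orientable.) -/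
/-!
Let `parity : Δ → {±1}` send every `Rᵢ` to `-1`, so that `Δ⁺` is its kernel. Sending
`R₀ ↦ (1, -1)`, `R₁ ↦ (a, -1)`, `R₂ ↦ (b, -1)` embeds `Δ` into `F(a, b) ⋊ C₂`, where `C₂` inverts
`a` and `b`; hence `Δ⁺` is free, so torsion-free, and every involution of `Δ` is odd.

`Δ^{0̂}` is generated by the conjugates of `R₁` and `R₂`, which are odd involutions. Pick
`h ∈ H ∖ Δ⁺` and `g` with `φ g = h`. If `φ` kills one of these conjugates `c`, then `g` and `g c`
both lie in `H φ⁻¹`, and one of them is odd. Otherwise `φ` maps each of them to a nontrivial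
involution, which is odd, so `parity ∘ φ = parity` on `Δ^{0̂}` and `g` itself is odd.
-/

def intUnitsHom {M : Type*} [Monoid M] (a : M) (ha : a * a = 1) : ℤˣ →* M where
  toFun u := if u = 1 then 1 else a
  map_one' := if_pos rfl
  map_mul' u v := by
    rcases Int.units_eq_one_or u with rfl | rfl <;>
      rcases Int.units_eq_one_or v with rfl | rfl <;> simp [ha]

@[simp]
lemma intUnitsHom_neg_one {M : Type*} [Monoid M] (a : M) (ha : a * a = 1) :
    intUnitsHom a ha (-1) = a := by
  simp [intUnitsHom]

namespace FreeGroup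

variable {α : Type*}

def invGensAut : MulAut (FreeGroup α) :=
  MonoidHom.toMulEquiv (lift fun a => (of a)⁻¹) (lift fun a => (of a)⁻¹)
    (ext_hom _ _ fun _ => by simp) (ext_hom _ _ fun _ => by simp)

@[simp]
lemma invGensAut_of (a : α) : invGensAut (of a) = (of a)⁻¹ := by simp [invGensAut]

lemma invGensAut_mul_self : (invGensAut : MulAut (FreeGroup α)) * invGensAut = 1 := by
  refine MulEquiv.toMonoidHom_injective (ext_hom _ _ fun a => ?_)
  simp

end FreeGroup

section Parity

variable {G : Type*} [Group G] (p : G →* ℤˣ)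

lemma comp_eq_comp_subtype_of_map_ne_one
    (hp : ∀ x : G, x * x = 1 → x ≠ 1 → p x = -1)
    {K : Subgroup G} {S : Set G} (hS : Subgroup.closure S = K)
    (hS2 : ∀ s ∈ S, s * s = 1) (hSp : ∀ s ∈ S, p s = -1)
    (φ : K →* G) (hφ : ∀ s : K, (s : G) ∈ S → φ s ≠ 1) :
    p.comp φ = p.comp K.subtype := by
  subst hS
  refine MonoidHom.eq_of_eqOn_dense Subgroup.closure_closure_coe_preimage fun s hs => ?_
  have hs2 : φ s * φ s = 1 := by
    rw [← map_mul, show s * s = 1 from Subtype.ext (hS2 s hs), map_one]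
  simp [hp _ hs2 (hφ s hs), hSp s hs]

theorem not_map_comap_le_ker
    (hp : ∀ x : G, x * x = 1 → x ≠ 1 → p x = -1)
    {K : Subgroup G} {S : Set G} (hS : Subgroup.closure S = K)
    (hS2 : ∀ s ∈ S, s * s = 1) (hSp : ∀ s ∈ S, p s = -1)
    (φ : K →* G) (hφ : Function.Surjective φ) {H : Subgroup G} (hH : ¬ H ≤ p.ker) :
    ¬ (H.comap φ).map K.subtype ≤ p.ker := by
  intro hle
  obtain ⟨h, hhH, hh⟩ := SetLike.not_le_iff_exists.mp hH
  obtain ⟨g, rfl⟩ := hφ h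
  have hpre : ∀ y : K, φ y ∈ H → p y = 1 := fun y hy => hle ⟨y, hy, rfl⟩
  by_cases hker : ∃ s : K, (s : G) ∈ S ∧ φ s = 1
  · obtain ⟨s, hsS, hs⟩ := hker
    have hgs := hpre (g * s) (by rwa [map_mul, hs, mul_one])
    rw [Subgroup.coe_mul, map_mul, hpre g hhH, hSp s hsS] at hgs
    exact absurd hgs (by decide)
  · push Not at hker
    have := DFunLike.congr_fun (comp_eq_comp_subtype_of_map_ne_one p hp hS hS2 hSp φ hker) g
    exact hh (this.trans (hpre g hhH))

end Parity

lemma IsConj.mul_self_eq_one {M : Type*} [Monoid M] {a b : M} (h : IsConj a b)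
    (ha : a * a = 1) : b * b = 1 := by
  rw [← pow_two] at ha ⊢
  exact isConj_one_right.mp (ha ▸ h.pow 2)

abbrev FreeByC2 : Type :=
  FreeGroup (Fin 2) ⋊[intUnitsHom FreeGroup.invGensAut FreeGroup.invGensAut_mul_self] ℤˣ

def toFreeByC2 : Δ →* FreeByC2 :=
  PresentedGroup.toGroup (f := fun i => ⟨![1, .of 0, .of 1] i, -1⟩) <| by
    rintro _ ⟨i, rfl⟩
    rw [map_pow, FreeGroup.lift_apply_of, pow_two]
    ext <;> fin_cases i <;> simp [SemidirectProduct.mul_left, SemidirectProduct.mul_right]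

lemma toFreeByC2_R (i : Fin 3) : toFreeByC2 (R i) = ⟨![1, .of 0, .of 1] i, -1⟩ :=
  PresentedGroup.toGroup.of _

def ofFreeByC2 : FreeByC2 →* Δ :=
  SemidirectProduct.lift (FreeGroup.lift ![R 1 * R 0, R 2 * R 0])
    (intUnitsHom (R 0) (R_mul_self 0)) <| by
    intro u
    refine FreeGroup.ext_hom _ _ fun a => ?_
    rcases Int.units_eq_one_or u with rfl | rfl
    · simp
    · fin_cases a <;> simp [mul_assoc, R_inv, R_mul_self]

lemma ofFreeByC2_toFreeByC2 (x : Δ) : ofFreeByC2 (toFreeByC2 x) = x := by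
  suffices ofFreeByC2.comp toFreeByC2 = MonoidHom.id Δ from DFunLike.congr_fun this x
  refine PresentedGroup.ext fun i => ?_
  change ofFreeByC2 (toFreeByC2 (R i)) = R i
  rw [toFreeByC2_R, SemidirectProduct.mk_eq_inl_mul_inr, map_mul, ofFreeByC2,
    SemidirectProduct.lift_inl, SemidirectProduct.lift_inr, intUnitsHom_neg_one]
  fin_cases i <;> simp [mul_assoc, R_mul_self]

lemma toFreeByC2_injective : Function.Injective toFreeByC2 :=
  Function.LeftInverse.injective ofFreeByC2_toFreeByC2

def parity : Δ →* ℤˣ := SemidirectProduct.rightHom.comp toFreeByC2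

lemma parity_R (i : Fin 3) : parity (R i) = -1 := by
  simp [parity, toFreeByC2_R]

lemma Δplus_eq_ker_parity : Δplus = parity.ker := by
  refine le_antisymm (Subgroup.closure_le _ |>.mpr ?_) fun x hx => ?_
  · rintro _ (rfl | rfl | rfl) <;> simp [parity_R]
  · obtain ⟨w, hw⟩ : toFreeByC2 x ∈ (SemidirectProduct.inl).range := by
      rwa [SemidirectProduct.range_inl_eq_ker_rightHom]
    rw [← ofFreeByC2_toFreeByC2 x, ← hw, ofFreeByC2, SemidirectProduct.lift_inl]
    refine FreeGroup.range_lift_le ?_ ⟨w, rfl⟩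
    rintro _ ⟨i, rfl⟩
    fin_cases i
    · have h : R 0 * R 1 ∈ Δplus := Subgroup.subset_closure (by simp)
      simpa [R_inv] using inv_mem h
    · exact Subgroup.subset_closure (by simp)

lemma parity_eq_neg_one_of_mul_self_eq_one {x : Δ} (hx2 : x * x = 1) (hx : x ≠ 1) :
    parity x = -1 := by
  refine (Int.units_eq_one_or _).resolve_left fun hpx => hx (toFreeByC2_injective ?_)
  obtain ⟨w, hw⟩ : toFreeByC2 x ∈ (SemidirectProduct.inl).range := by
    rwa [SemidirectProduct.range_inl_eq_ker_rightHom]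
  have hw2 : w ^ 2 = 1 := SemidirectProduct.inl_injective <| by
    rw [map_pow, hw, pow_two, ← map_mul, hx2, map_one, map_one]
  rw [← hw, sq_eq_one.mp hw2, map_one, map_one]

theorem stmt17 (φ : Δ0 →* Δ) (hφ : Function.Surjective φ)
    (H : Subgroup Δ) (hH : ¬ H ≤ Δplus) :
    ¬ preim φ H ≤ Δplus := by
  rw [Δplus_eq_ker_parity] at hH ⊢
  have hconj : ∀ c ∈ Group.conjugatesOfSet {R 1, R 2}, ∃ i, IsConj (R i) c := by
    intro c hc
    obtain ⟨a, ha, hac⟩ := Group.mem_conjugatesOfSet_iff.mp hc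
    rcases ha with rfl | rfl
    exacts [⟨1, hac⟩, ⟨2, hac⟩]
  -- `rfl`: a normal closure is by definition the closure of the conjugates
  refine not_map_comap_le_ker parity (fun _ => parity_eq_neg_one_of_mul_self_eq_one) rfl
    (fun c hc => ?_) (fun c hc => ?_) φ hφ hH
  · obtain ⟨i, hi⟩ := hconj c hc
    exact hi.mul_self_eq_one (R_mul_self i)
  · obtain ⟨i, hi⟩ := hconj c hc
    rw [← isConj_iff_eq.mp (parity.map_isConj hi), parity_R]
end
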